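/- arXiv:1803.05252 — 7 statements merged into one kernel-verified Lean document; each statement's English description precedes it below -/
import Mathlib

section
/- For every join-semilattice S there exist a type A and a function f : S → Set A such that f (x ⊔ y) = f x ∪ f y for all x, y ∈ S, and such that for all x, y ∈ S, x ≤ y if and only if f x ⊆ f y. (Every semilattice model can be atomized: elements become sets of atoms, the idempotent merge operation becomes set union, and the partial order becomes set inclusion.) -/
universe u

/-! Send `x` to the complement of its principal up-set `Ici x`: up-sets reverse the order and
turn joins into intersections, so their complements preserve the order and turn joins into unions. -/

theorem Set.compl_Ici_sup {S : Type*} [SemilatticeSup S] (x y : S) :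
    (Ici (x ⊔ y))ᶜ = (Ici x)ᶜ ∪ (Ici y)ᶜ := by
  rw [← Ici_inter_Ici, compl_inter]

theorem Set.compl_Ici_subset_compl_Ici {S : Type*} [Preorder S] {x y : S} :
    (Ici x)ᶜ ⊆ (Ici y)ᶜ ↔ x ≤ y := by
  rw [compl_subset_compl, Ici_subset_Ici]

/-- Every join-semilattice can be atomized: there is a type `A` of atoms
and a map `f` sending each element to a set of atoms, such that the merge (join) operation
becomes set union and the partial order becomes set inclusion. -/
theorem semilattice_atomization (S : Type u) [SemilatticeSup S] :
    ∃ (A : Type u) (f : S → Set A),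
      (∀ x y : S, f (x ⊔ y) = f x ∪ f y) ∧
      (∀ x y : S, x ≤ y ↔ f x ⊆ f y) :=
  ⟨S, fun x => (Set.Ici x)ᶜ, Set.compl_Ici_sup, fun _ _ => Set.compl_Ici_subset_compl_Ici.symm⟩
end

section
/- Let f : C → Set A and g : C → Set B be atomized models over the same constants C, and define the disjoint-union model h : C → Set (A ⊕ B) by h c = Sum.inl '' (f c) ∪ Sum.inr '' (g c). Then for all terms s, t over C: h satisfies s ≤ t if and only if both f and g satisfy s ≤ t. Consequently h satisfies every positive relation satisfied by both f and g, and h satisfies every negative relation satisfied by f or by g. -/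
/-- The atom set of a term (set of constants) `t` under the atomized model `f`. -/
def atomSet {C A : Type*} (f : C → Set A) (t : Set C) : Set A := ⋃ c ∈ t, f c

/-- The atomized model `f` satisfies the positive relation `s ≤ t`. -/
def Sat {C A : Type*} (f : C → Set A) (s t : Set C) : Prop := atomSet f s ⊆ atomSet f t

/-! `Set.sumEquiv : Set (A ⊕ B) ≃o Set A × Set B` identifies the disjoint-union model with the
pair `(f, g)`. Being an order isomorphism, it commutes with the unions defining atom sets and
reflects inclusions, and inclusion of pairs is componentwise. -/

theorem atomSet_sumEquiv_symm {C A B : Type*} (f : C → Set A) (g : C → Set B) (t : Set C) :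
    atomSet (fun c ↦ Set.sumEquiv.symm (f c, g c)) t =
      Set.sumEquiv.symm (atomSet f t, atomSet g t) := by
  ext (a | b) <;> simp [atomSet]

theorem sat_sumEquiv_symm_iff {C A B : Type*} (f : C → Set A) (g : C → Set B) (s t : Set C) :
    Sat (fun c ↦ Set.sumEquiv.symm (f c, g c)) s t ↔ Sat f s t ∧ Sat g s t := by
  simp only [Sat, atomSet_sumEquiv_symm, OrderIso.le_iff_le, Prod.mk_le_mk]

/-- The disjoint-union model `h` of two atomized models `f` and `g`
satisfies a positive relation `s ≤ t` iff both `f` and `g` do; consequently `h` satisfies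
every positive relation satisfied by both, and every negative relation satisfied by
either of them. -/
theorem disjoint_union_model {C A B : Type*} (f : C → Set A) (g : C → Set B)
    (h : C → Set (A ⊕ B))
    (hdef : ∀ c, h c = Sum.inl '' f c ∪ Sum.inr '' g c) :
    ∀ s t : Set C,
      (Sat h s t ↔ Sat f s t ∧ Sat g s t) ∧
      (Sat f s t → Sat g s t → Sat h s t) ∧
      ((¬ Sat f s t ∨ ¬ Sat g s t) → ¬ Sat h s t) := by
  obtain rfl : h = fun c ↦ Set.sumEquiv.symm (f c, g c) := funext hdef
  intro s t
  rw [sat_sumEquiv_symm_iff]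
  tauto
end

section
/- Let R be a relation set over C and let p and q be positive relations (pairs of terms) over C. Assume that R together with the negative relation ¬p is satisfiable, and that every atomized model over C (with any atom type) satisfying R and ¬p satisfies q. Then every atomized model over C satisfying R satisfies q. (A positive relation entailed by a set of positive and negative relations is already entailed without the negative relation.) -/
/-!
Gluing two atomized models side by side, on the disjoint union of their atom types, yields a
model that satisfies a positive relation exactly when both summands do, and a negative one as
soon as either summand does. So gluing a model of `R ∪ {¬p}` to an arbitrary model `g` of `R`
gives a model of `R ∪ {¬p}`; it satisfies `q` by hypothesis, hence so does its summand `g`.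
-/

universe u

/-- An atomized model `f` satisfies the positive relation `r.1 ≤ r.2` between terms. -/
def SatPos {C A : Type*} (f : C → Set A) (r : Set C × Set C) : Prop :=
  (⋃ c ∈ r.1, f c) ⊆ ⋃ c ∈ r.2, f c

/-- An atomized model `f` satisfies the relation set consisting of positive relations `Rp`
and negative relations `Rn`. -/
def SatRel {C A : Type*} (f : C → Set A) (Rp Rn : Set (Set C × Set C)) : Prop :=
  (∀ r ∈ Rp, SatPos f r) ∧ (∀ r ∈ Rn, ¬ SatPos f r)

section SumModel

variable {C A B : Type*}

def sumModel (f : C → Set A) (g : C → Set B) (c : C) : Set (A ⊕ B) :=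
  Set.sumEquiv.symm (f c, g c)

theorem sumEquiv_biUnion_sumModel (f : C → Set A) (g : C → Set B) (t : Set C) :
    Set.sumEquiv (⋃ c ∈ t, sumModel f g c) = (⋃ c ∈ t, f c, ⋃ c ∈ t, g c) := by
  simp [sumModel, Set.preimage_image_eq _ Sum.inl_injective,
    Set.preimage_image_eq _ Sum.inr_injective]

theorem satPos_sumModel_iff (f : C → Set A) (g : C → Set B) (r : Set C × Set C) :
    SatPos (sumModel f g) r ↔ SatPos f r ∧ SatPos g r := by
  rw [SatPos, ← Set.sumEquiv.le_iff_le, sumEquiv_biUnion_sumModel, sumEquiv_biUnion_sumModel,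
    Prod.mk_le_mk]
  rfl

theorem SatRel.sumModel {f : C → Set A} {g : C → Set B} {Rp Rn : Set (Set C × Set C)}
    (hf : SatRel f Rp Rn) (hg : SatRel g Rp Rn) : SatRel (sumModel f g) Rp Rn :=
  ⟨fun r hr => (satPos_sumModel_iff f g r).2 ⟨hf.1 r hr, hg.1 r hr⟩,
    fun r hr hfg => hf.2 r hr ((satPos_sumModel_iff f g r).1 hfg).1⟩

end SumModel

/-- If `R ∪ {¬p}` is satisfiable and every atomized model of `R ∪ {¬p}`
satisfies the positive relation `q`, then every atomized model of `R` satisfies `q`: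
a positive relation entailed with the help of a negative relation is already entailed
without it. -/
theorem positive_entailment {C : Type u} (Rp Rn : Set (Set C × Set C))
    (p q : Set C × Set C)
    (hsat : ∃ (A : Type u) (f : C → Set A), SatRel f Rp Rn ∧ ¬ SatPos f p)
    (hent : ∀ (A : Type u) (f : C → Set A), SatRel f Rp Rn → ¬ SatPos f p → SatPos f q) :
    ∀ (A : Type u) (f : C → Set A), SatRel f Rp Rn → SatPos f q := by
  obtain ⟨A, f, hf, hfp⟩ := hsat
  intro B g hg
  have hnp : ¬ SatPos (sumModel f g) p := fun h => hfp ((satPos_sumModel_iff f g p).1 h).1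
  exact ((satPos_sumModel_iff f g q).1 (hent _ _ (hf.sumModel hg) hnp)).2
end

section
/- Let R be a satisfiable relation set over C. Then there exists an atomized model f over C satisfying R such that for all terms a, b over C: f satisfies a ≤ b if and only if every atomized model over C (with any atom type) satisfying all positive relations of R⁺ satisfies a ≤ b. (Existence of the freest model of R: it satisfies exactly the positive relations entailed by R⁺ alone, while still satisfying every negative relation of R⁻.) -/
universe u

section

variable {C A : Type*}

def ClosedUnder (Rp : Set (Set C × Set C)) (S : Set C) : Prop :=
  ∀ r ∈ Rp, (r.1 ∩ S).Nonempty → (r.2 ∩ S).Nonempty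

theorem satPos_iff {f : C → Set A} {r : Set C × Set C} :
    SatPos f r ↔ ∀ φ : A, (r.1 ∩ {c | φ ∈ f c}).Nonempty → (r.2 ∩ {c | φ ∈ f c}).Nonempty := by
  simp [SatPos, Set.subset_def, Set.Nonempty]

theorem forall_satPos_iff_closedUnder {f : C → Set A} {Rp : Set (Set C × Set C)} :
    (∀ r ∈ Rp, SatPos f r) ↔ ∀ φ : A, ClosedUnder Rp {c | φ ∈ f c} := by
  simp only [satPos_iff, ClosedUnder]
  exact ⟨fun h φ r hr => h r hr φ, fun h r hr φ => h φ r hr⟩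

def freeModel (Rp : Set (Set C × Set C)) : C → Set {S : Set C // ClosedUnder Rp S} :=
  fun c => {S | c ∈ S.1}

theorem freeModel_satPos (Rp : Set (Set C × Set C)) : ∀ r ∈ Rp, SatPos (freeModel Rp) r :=
  forall_satPos_iff_closedUnder.2 fun S => S.2

theorem SatPos.of_freeModel {Rp : Set (Set C × Set C)} {r : Set C × Set C}
    (hr : SatPos (freeModel Rp) r) {g : C → Set A} (hg : ∀ r ∈ Rp, SatPos g r) : SatPos g r :=
  satPos_iff.2 fun φ => satPos_iff.1 hr ⟨_, forall_satPos_iff_closedUnder.1 hg φ⟩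

end

/-- Existence of the freest model of a satisfiable relation set `R`:
an atomized model of `R` satisfying exactly those positive relations entailed by the
positive part `Rp` alone. -/
theorem freest_model_exists {C : Type u} (Rp Rn : Set (Set C × Set C))
    (hsat : ∃ (A : Type u) (f : C → Set A), SatRel f Rp Rn) :
    ∃ (A : Type u) (f : C → Set A), SatRel f Rp Rn ∧
      ∀ a b : Set C,
        SatPos f (a, b) ↔
          ∀ (B : Type u) (g : C → Set B), (∀ r ∈ Rp, SatPos g r) → SatPos g (a, b) := by
  obtain ⟨A, h, hpos, hneg⟩ := hsat
  refine ⟨_, freeModel Rp, ⟨freeModel_satPos Rp, fun r hr hfree => ?_⟩, fun a b => ?_⟩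
  · exact hneg r hr (hfree.of_freeModel hpos)
  · exact ⟨fun hab _ _ hg => hab.of_freeModel hg, fun H => H _ _ (freeModel_satPos Rp)⟩
end

section
/- Let f : C → Set A and g : C → Set B be atomized models over the same constants C, and suppose g satisfies every pinning relation of f (i.e., for every atom φ of f and every constant c with φ ∈ f c, g does not satisfy {c} ≤ T_φ). Then for all terms a, b over C: if g satisfies a ≤ b, then f satisfies a ≤ b. Equivalently, every negative relation ¬(a ≤ b) satisfied by f is also satisfied by g; thus g is as free as or freer than f, and the pinning relations of f capture all negative order relations of f. -/
/-- The pinning term of an atom `φ` of the model `f`: the constants not containing `φ`. -/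
def pinningTerm {C A : Type*} (f : C → Set A) (φ : A) : Set C := {d | φ ∉ f d}

section AtomizedModel

variable {C A : Type*} (f : C → Set A)

theorem mem_atomSet {t : Set C} {φ : A} : φ ∈ atomSet f t ↔ ∃ c ∈ t, φ ∈ f c := by
  simp only [atomSet, Set.mem_iUnion, exists_prop]

theorem atomSet_mono {s t : Set C} (h : s ⊆ t) : atomSet f s ⊆ atomSet f t :=
  Set.biUnion_subset_biUnion_left h

theorem subset_pinningTerm_iff {t : Set C} {φ : A} :
    t ⊆ pinningTerm f φ ↔ φ ∉ atomSet f t := by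
  simp only [mem_atomSet, not_exists, not_and]
  rfl

variable {f}

theorem Sat.mono {s s' t t' : Set C} (h : Sat f s t) (hs : s' ⊆ s) (ht : t ⊆ t') :
    Sat f s' t' :=
  (atomSet_mono f hs).trans (h.trans (atomSet_mono f ht))

theorem exists_pinningTerm_of_not_sat {s t : Set C} (h : ¬ Sat f s t) :
    ∃ φ c, c ∈ s ∧ φ ∈ f c ∧ t ⊆ pinningTerm f φ := by
  obtain ⟨φ, hφs, hφt⟩ := Set.not_subset.mp h
  obtain ⟨c, hc, hφc⟩ := (mem_atomSet f).mp hφs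
  exact ⟨φ, c, hc, hφc, (subset_pinningTerm_iff f).mpr hφt⟩

end AtomizedModel

/-- If `g` satisfies every pinning relation of `f`, then every positive
relation satisfied by `g` is satisfied by `f`; equivalently, `g` is as free as or freer
than `f`, i.e. the pinning relations of `f` capture all its negative order relations. -/
theorem pinning_relations_freer {C A B : Type*} (f : C → Set A) (g : C → Set B)
    (hpin : ∀ (φ : A) (c : C), φ ∈ f c → ¬ Sat g {c} (pinningTerm f φ)) :
    ∀ a b : Set C, Sat g a b → Sat f a b := by
  intro a b hg
  by_contra hf
  obtain ⟨φ, c, hca, hφc, hb⟩ := exists_pinningTerm_of_not_sat hf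
  exact hpin φ c hφc (hg.mono (Set.singleton_subset_iff.mpr hca) hb)
end

section
/- Let f : C → Set A and g : C → Set B be atomized models over the same constants C, and suppose g satisfies every pinning relation of f (i.e., for every atom φ of f and every constant c with φ ∈ f c, g does not satisfy {c} ≤ T_φ). Then for every atom φ of f there exists an atom η of g such that φ is as large or larger than η: for every constant d, if η ∈ g d then φ ∈ f d. -/
section

variable {C A B : Type*}

theorem mem_atomSet_iff (f : C → Set A) (t : Set C) (a : A) :
    a ∈ atomSet f t ↔ ∃ c ∈ t, a ∈ f c :=
  Set.mem_iUnion₂.trans (by simp only [exists_prop])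

theorem atomSet_singleton (f : C → Set A) (c : C) : atomSet f {c} = f c :=
  Set.biUnion_singleton c f

theorem sat_singleton_iff (f : C → Set A) (c : C) (t : Set C) :
    Sat f {c} t ↔ ∀ a ∈ f c, ∃ d ∈ t, a ∈ f d := by
  simp only [Sat, atomSet_singleton, Set.subset_def, mem_atomSet_iff]

theorem not_sat_singleton_pinningTerm_iff (f : C → Set A) (g : C → Set B) (c : C) (φ : A) :
    ¬ Sat g {c} (pinningTerm f φ) ↔ ∃ η ∈ g c, ∀ d, η ∈ g d → φ ∈ f d := by
  simp only [sat_singleton_iff, pinningTerm, Set.mem_ofPred_eq, not_forall, exists_prop,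
    not_exists, not_and, not_imp_not]

end

/-- If `g` satisfies every pinning relation of `f`, then for every atom
`φ` of `f` there is an atom `η` of `g` such that `φ` is as large or larger than `η`:
every constant containing `η` (in `g`) contains `φ` (in `f`). -/
theorem pinning_relations_atom_domination {C A B : Type*} (f : C → Set A) (g : C → Set B)
    (hpin : ∀ (φ : A) (c : C), φ ∈ f c → ¬ Sat g {c} (pinningTerm f φ)) :
    ∀ φ : A, (∃ c, φ ∈ f c) →
      ∃ η : B, (∃ c, η ∈ g c) ∧ ∀ d : C, η ∈ g d → φ ∈ f d := by
  rintro φ ⟨c, hφc⟩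
  obtain ⟨η, hηc, hdom⟩ := (not_sat_singleton_pinningTerm_iff f g c φ).mp (hpin φ c hφc)
  exact ⟨η, ⟨c, hηc⟩, hdom⟩
end

section
/- Let g : C → Set Ξ be an atomized model, thought of as the dual algebra assigning to the dual [c] of each constant c its set of dual atoms, and define the master model f : C → Set Ξ by f c = {ξ : ξ ∉ g c}. Then for all terms a, b over C: f satisfies a ≤ b (i.e., ⋃_{c ∈ a} f c ⊆ ⋃_{c ∈ b} f c) if and only if ⋂_{c ∈ b} g c ⊆ ⋂_{c ∈ a} g c (i.e., the dual satisfies [b] ≤ [a], where the dual atom set of a term is the intersection of the dual atom sets of its component constants). In particular, f satisfies a negative relation ¬(a ≤ b) if and only if the dual satisfies ¬([b] ≤ [a]): the master atomization built from the dual satisfies exactly the reversed positive and negative relations of the dual. -/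
/-! Complementing every constant turns the union defining an atom set into the complement of the
corresponding intersection (De Morgan), and complementation reverses inclusion. -/

theorem atomSet_compl {C A : Type*} (g : C → Set A) (t : Set C) :
    atomSet (fun c => (g c)ᶜ) t = (⋂ c ∈ t, g c)ᶜ := by
  simp only [atomSet, Set.compl_iInter]

theorem sat_compl_iff {C A : Type*} (g : C → Set A) (a b : Set C) :
    Sat (fun c => (g c)ᶜ) a b ↔ (⋂ c ∈ b, g c) ⊆ ⋂ c ∈ a, g c := by
  rw [Sat, atomSet_compl, atomSet_compl, Set.compl_subset_compl]

/-- Let `g` be the dual algebra assigning dual atom sets to (duals of)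
constants and let the master model be `f c = {ξ | ξ ∉ g c}`. Then `f` satisfies `a ≤ b`
iff the dual satisfies `[b] ≤ [a]` (intersections of dual atom sets), and likewise for
negative relations: the master satisfies exactly the reversed relations of the dual. -/
theorem master_dual_reversal {C Ξ : Type*} (g : C → Set Ξ) (f : C → Set Ξ)
    (hf : ∀ c, f c = {ξ | ξ ∉ g c}) :
    ∀ a b : Set C,
      (Sat f a b ↔ (⋂ c ∈ b, g c) ⊆ ⋂ c ∈ a, g c) ∧
      (¬ Sat f a b ↔ ¬ ((⋂ c ∈ b, g c) ⊆ ⋂ c ∈ a, g c)) := by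
  obtain rfl : f = fun c => (g c)ᶜ := funext hf
  intro a b
  exact ⟨sat_compl_iff g a b, not_congr (sat_compl_iff g a b)⟩
end
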